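/- Let λ_1 ≤ ... ≤ λ_n be positive reals, 1 ≤ k ≤ n-1, q > 1, and q' = q/(q-1). Then λ_n/λ_1 ≤ (σ_k^q / J)^{1/q} · (σ_{n-k}^{q'} / J)^{1/q'}, where σ_m is the m-th elementary symmetric polynomial of the λ_i and J = λ_1⋯λ_n. -/

import Mathlib

/-- The `m`-th elementary symmetric polynomial of the values `l 1, …, l n`. -/
def esymmFun (n m : ℕ) (l : Fin n → ℝ) : ℝ :=
  ∑ s ∈ Finset.powersetCard m (Finset.univ : Finset (Fin n)), ∏ i ∈ s, l i

/-!
Removing `λ_1` from `λ_1 ⋯ λ_n` and then doubling `λ_n` gives `λ_n J / λ_1`, a product of one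
`k`-fold and one `(n-k)`-fold monomial: split the indices `2, …, n` into a `k`-set `S ∋ n` and its
complement, and add `n` to the complement. Hence `λ_n J / λ_1 ≤ σ_k σ_{n-k}`. The Hölder-type
right-hand side is just `σ_k σ_{n-k} / J` rewritten with `J = J^{1/q} J^{1/q'}`.
-/

open Finset

theorem esymmFun_nonneg {n m : ℕ} {l : Fin n → ℝ} (hl : ∀ i, 0 ≤ l i) : 0 ≤ esymmFun n m l :=
  sum_nonneg fun _ _ => prod_nonneg fun i _ => hl i

theorem prod_le_esymmFun {n m : ℕ} {l : Fin n → ℝ} (hl : ∀ i, 0 ≤ l i) {s : Finset (Fin n)}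
    (hs : #s = m) : ∏ i ∈ s, l i ≤ esymmFun n m l :=
  single_le_sum (f := fun t => ∏ i ∈ t, l i) (fun _ _ => prod_nonneg fun i _ => hl i)
    (mem_powersetCard.2 ⟨subset_univ s, hs⟩)

theorem mul_prod_le_mul_esymmFun_mul_esymmFun {n k : ℕ} (hk : 1 ≤ k) (hkn : k < n)
    {l : Fin n → ℝ} (hl : ∀ i, 0 ≤ l i) {i j : Fin n} (hij : i ≠ j) :
    l j * ∏ m, l m ≤ l i * (esymmFun n k l * esymmFun n (n - k) l) := by
  classical
  have hj : j ∈ univ.erase i := mem_erase.2 ⟨hij.symm, mem_univ j⟩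
  have hcard_erase : #(univ.erase i) = n - 1 := by simp
  obtain ⟨S, hjS, hSi, hScard⟩ := exists_subsuperset_card_eq (singleton_subset_iff.2 hj)
    (by simpa using hk) (by omega)
  have hjT : j ∉ univ.erase i \ S := fun h => (mem_sdiff.1 h).2 (singleton_subset_iff.1 hjS)
  have hTcard : #(insert j (univ.erase i \ S)) = n - k := by
    rw [card_insert_of_notMem hjT, card_sdiff_of_subset hSi, hScard, hcard_erase]
    omega
  have hST : (∏ m ∈ S, l m) * ∏ m ∈ insert j (univ.erase i \ S), l m
      = l j * ∏ m ∈ univ.erase i, l m := by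
    rw [prod_insert hjT, mul_left_comm, mul_comm (∏ m ∈ S, l m), prod_sdiff hSi]
  calc l j * ∏ m, l m = l i * (l j * ∏ m ∈ univ.erase i, l m) := by
        rw [← mul_prod_erase univ l (mem_univ i)]; ring
    _ = l i * ((∏ m ∈ S, l m) * ∏ m ∈ insert j (univ.erase i \ S), l m) := by rw [hST]
    _ ≤ l i * (esymmFun n k l * esymmFun n (n - k) l) :=
        mul_le_mul_of_nonneg_left (mul_le_mul (prod_le_esymmFun hl hScard)
          (prod_le_esymmFun hl hTcard) (prod_nonneg fun m _ => hl m) (esymmFun_nonneg hl)) (hl i)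

theorem div_le_esymmFun_mul_esymmFun_div_prod {n k : ℕ} (hk : 1 ≤ k) (hkn : k < n)
    {l : Fin n → ℝ} (hl : ∀ i, 0 < l i) {i j : Fin n} (hij : i ≠ j) :
    l j / l i ≤ esymmFun n k l * esymmFun n (n - k) l / ∏ m, l m := by
  rw [div_le_div_iff₀ (hl i) (prod_pos fun m _ => hl m), mul_comm _ (l i)]
  exact mul_prod_le_mul_esymmFun_mul_esymmFun hk hkn (fun m => (hl m).le) hij

theorem Real.HolderConjugate.rpow_div_rpow_mul_rpow_div_rpow {p q A B J : ℝ}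
    (hpq : p.HolderConjugate q) (hA : 0 ≤ A) (hB : 0 ≤ B) (hJ : 0 ≤ J) :
    (A ^ p / J) ^ (1 / p) * (B ^ q / J) ^ (1 / q) = A * B / J := by
  have hsum : 1 / p + 1 / q = 1 := by rw [hpq.one_div_add_one_div, div_one]
  have hJ_split : J ^ (1 / p) * J ^ (1 / q) = J := by
    rw [← Real.rpow_add' hJ (by rw [hsum]; exact one_ne_zero), hsum, Real.rpow_one]
  rw [Real.div_rpow (Real.rpow_nonneg hA p) hJ, Real.div_rpow (Real.rpow_nonneg hB q) hJ,
    one_div, one_div, Real.rpow_rpow_inv hA hpq.ne_zero, Real.rpow_rpow_inv hB hpq.symm.ne_zero,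
    div_mul_div_comm, ← one_div, ← one_div, hJ_split]

/-- For positive `λ_1 ≤ ⋯ ≤ λ_n`, `1 ≤ k ≤ n-1`, `q > 1` and `q' = q/(q-1)`,
`λ_n/λ_1 ≤ (σ_k^q / J)^{1/q} · (σ_{n-k}^{q'} / J)^{1/q'}` with `J = λ_1 ⋯ λ_n`. -/
theorem ratio_le_holder_split (n k : ℕ) (hk : 1 ≤ k) (hkn : k + 1 ≤ n)
    (l : Fin n → ℝ) (hpos : ∀ i, 0 < l i)
    (q q' : ℝ) (hq : 1 < q) (hq' : q' = q / (q - 1)) :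
    l ⟨n - 1, by omega⟩ / l ⟨0, by omega⟩ ≤
      (esymmFun n k l ^ q / ∏ i, l i) ^ (1 / q) *
        (esymmFun n (n - k) l ^ q' / ∏ i, l i) ^ (1 / q') := by
  have hl : ∀ i, 0 ≤ l i := fun i => (hpos i).le
  have hqq' : q.HolderConjugate q' := (Real.holderConjugate_iff_eq_conjExponent hq).2 hq'
  rw [hqq'.rpow_div_rpow_mul_rpow_div_rpow (esymmFun_nonneg hl) (esymmFun_nonneg hl)
    (prod_nonneg fun i _ => hl i)]
  exact div_le_esymmFun_mul_esymmFun_div_prod hk (by omega) hpos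
    (by simp only [ne_eq, Fin.mk.injEq]; omega)
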